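/- arXiv:2511.16503 — 2 statements merged into one kernel-verified Lean document; each statement's English description precedes it below -/
import Mathlib

section
/- Let (X,d) be a UC quasi-metric space whose forward topology is T₁ and normal. Then for any two nonempty disjoint closed subsets A and B of (X,d), d(A,B) > 0. -/
open Filter Topology Set

structure IsQuasiMetric {X : Type*} (d : X → X → ℝ) : Prop where
  nonneg : ∀ x y, 0 ≤ d x y
  refl : ∀ x, d x x = 0
  eq_of_both_zero : ∀ x y, d x y = 0 → d y x = 0 → x = y
  triangle : ∀ x y z, d x y ≤ d x z + d z y

/-- The forward topology generated by forward balls `B⁺(x,ε) = {y | d x y < ε}`. -/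
def forwardTopology {X : Type*} (d : X → X → ℝ) : TopologicalSpace X :=
  TopologicalSpace.generateFrom {S | ∃ x : X, ∃ ε : ℝ, 0 < ε ∧ S = {y | d x y < ε}}

/-- `s` forward converges to `x`: `d x (s n) → 0`. -/
def ForwardConv {X : Type*} (d : X → X → ℝ) (s : ℕ → X) (x : X) : Prop :=
  ∀ ε > (0:ℝ), ∃ N : ℕ, ∀ n ≥ N, d x (s n) < ε

/-- `s` backward converges to `x`: `d (s n) x → 0`. -/
def BackwardConv {X : Type*} (d : X → X → ℝ) (s : ℕ → X) (x : X) : Prop :=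
  ∀ ε > (0:ℝ), ∃ N : ℕ, ∀ n ≥ N, d (s n) x < ε

/-- `x` is a cluster point of `s`: some subsequence forward converges to `x`. -/
def IsClusterPointOf {X : Type*} (d : X → X → ℝ) (s : ℕ → X) (x : X) : Prop :=
  ∃ φ : ℕ → ℕ, StrictMono φ ∧ ForwardConv d (s ∘ φ) x

def LeftKCauchy {X : Type*} (d : X → X → ℝ) (s : ℕ → X) : Prop :=
  ∀ ε > (0:ℝ), ∃ n₀ : ℕ, ∀ k n : ℕ, n₀ ≤ k → k ≤ n → d (s k) (s n) < ε

/-- `s` is forward parallel to `t`. -/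
def ForwardParallel {X : Type*} (d : X → X → ℝ) (s t : ℕ → X) : Prop :=
  ∀ ε > (0:ℝ), ∃ N : ℕ, ∀ n ≥ N, d (s n) (t n) < ε

/-- Forward continuity for real-valued functions (ε-δ form). -/
def ForwardContinuous {X : Type*} (d : X → X → ℝ) (f : X → ℝ) : Prop :=
  ∀ x₀ : X, ∀ ε > (0:ℝ), ∃ δ > (0:ℝ), ∀ y, d x₀ y < δ → |f x₀ - f y| < ε

/-- Uniform continuity for real-valued functions. -/
def UniformlyCont {X : Type*} (d : X → X → ℝ) (f : X → ℝ) : Prop :=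
  ∀ ε > (0:ℝ), ∃ δ > (0:ℝ), ∀ x y, d x y < δ → |f x - f y| < ε

/-- `(X,d)` is a UC quasi-metric space. -/
def IsUC {X : Type*} (d : X → X → ℝ) : Prop :=
  ∀ f : X → ℝ, ForwardContinuous d f → UniformlyCont d f

/-- Distance between two sets: `inf {d a b | a ∈ A, b ∈ B}`. -/
noncomputable def setDist {X : Type*} (d : X → X → ℝ) (A B : Set X) : ℝ :=
  sInf {r : ℝ | ∃ a ∈ A, ∃ b ∈ B, d a b = r}

/-! Urysohn's lemma separates `A` and `B` by a continuous `f : X → ℝ` with `f = 0` on `A` and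
`f = 1` on `B`. It is forward continuous, hence uniformly continuous by UC, and the `δ` that
uniform continuity gives for `ε = 1` cannot exceed any `d a b` with `a ∈ A`, `b ∈ B`. -/

section

variable {X : Type*} {d : X → X → ℝ}

lemma exists_forward_ball_subset_of_isOpen (htri : ∀ x y z, d x y ≤ d x z + d z y)
    {U : Set X} (hU : IsOpen[forwardTopology d] U) :
    ∀ x ∈ U, ∃ δ > 0, {y | d x y < δ} ⊆ U := by
  induction hU with
  | basic S hS =>
    obtain ⟨c, ε, -, rfl⟩ := hS
    intro x hx
    exact ⟨ε - d c x, sub_pos.mpr hx, fun y (hy : d x y < ε - d c x) =>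
      show d c y < ε by linarith [htri c y x]⟩
  | univ => exact fun _ _ => ⟨1, one_pos, subset_univ _⟩
  | inter S T _ _ ihS ihT =>
    intro x hx
    obtain ⟨δ₁, hδ₁, hS⟩ := ihS x hx.1
    obtain ⟨δ₂, hδ₂, hT⟩ := ihT x hx.2
    exact ⟨min δ₁ δ₂, lt_min hδ₁ hδ₂, fun y (hy : d x y < min δ₁ δ₂) =>
      ⟨hS (hy.trans_le (min_le_left _ _)), hT (hy.trans_le (min_le_right _ _))⟩⟩
  | sUnion 𝒮 _ ih =>
    rintro x ⟨S, hS𝒮, hxS⟩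
    obtain ⟨δ, hδ, hS⟩ := ih S hS𝒮 x hxS
    exact ⟨δ, hδ, hS.trans (subset_sUnion_of_mem hS𝒮)⟩

lemma forwardContinuous_of_continuous (htri : ∀ x y z, d x y ≤ d x z + d z y) {f : X → ℝ}
    (hf : Continuous[forwardTopology d, _] f) : ForwardContinuous d f := by
  let _ : TopologicalSpace X := forwardTopology d
  intro x ε hε
  have hU : IsOpen (f ⁻¹' Metric.ball (f x) ε) := Metric.isOpen_ball.preimage hf
  obtain ⟨δ, hδ, hball⟩ :=
    exists_forward_ball_subset_of_isOpen htri hU x (Metric.mem_ball_self hε)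
  refine ⟨δ, hδ, fun y hy => ?_⟩
  simpa only [mem_preimage, Metric.mem_ball, Real.dist_eq, abs_sub_comm] using hball hy

lemma le_setDist {A B : Set X} (hA : A.Nonempty) (hB : B.Nonempty) {δ : ℝ}
    (h : ∀ a ∈ A, ∀ b ∈ B, δ ≤ d a b) : δ ≤ setDist d A B := by
  obtain ⟨a, ha⟩ := hA
  obtain ⟨b, hb⟩ := hB
  refine le_csInf ⟨d a b, a, ha, b, hb, rfl⟩ ?_
  rintro r ⟨a, ha, b, hb, rfl⟩
  exact h a ha b hb

lemma UniformlyCont.exists_pos_le_of_eqOn {A B : Set X} {f : X → ℝ} (hf : UniformlyCont d f)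
    (hfA : EqOn f 0 A) (hfB : EqOn f 1 B) : ∃ δ > 0, ∀ a ∈ A, ∀ b ∈ B, δ ≤ d a b := by
  obtain ⟨δ, hδ, hf⟩ := hf 1 one_pos
  refine ⟨δ, hδ, fun a ha b hb => not_lt.mp fun hab => ?_⟩
  have := hf a b hab
  simp [hfA ha, hfB hb] at this

end

theorem isUC_pos_dist_closed_general {X : Type*} (d : X → X → ℝ) (hd : IsQuasiMetric d)
    (hN : @NormalSpace X (forwardTopology d))
    (hUC : IsUC d)
    (A B : Set X) (hA : A.Nonempty) (hB : B.Nonempty)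
    (hAc : @IsClosed X (forwardTopology d) A) (hBc : @IsClosed X (forwardTopology d) B)
    (hAB : Disjoint A B) :
    0 < setDist d A B := by
  let _ : TopologicalSpace X := forwardTopology d
  obtain ⟨f, hfA, hfB, -⟩ := exists_continuous_zero_one_of_isClosed hAc hBc hAB
  have hfu : UniformlyCont d f := hUC f (forwardContinuous_of_continuous hd.triangle f.continuous)
  obtain ⟨δ, hδ, hδAB⟩ := hfu.exists_pos_le_of_eqOn hfA hfB
  exact hδ.trans_le (le_setDist hA hB hδAB)

/-- in a T₁, normal, UC quasi-metric space, disjoint nonempty closed sets are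
at positive distance. -/
theorem isUC_pos_dist_closed {X : Type*} (d : X → X → ℝ) (hd : IsQuasiMetric d)
    (hT1 : @T1Space X (forwardTopology d))
    (hN : @NormalSpace X (forwardTopology d))
    (hUC : IsUC d)
    (A B : Set X) (hA : A.Nonempty) (hB : B.Nonempty)
    (hAc : @IsClosed X (forwardTopology d) A) (hBc : @IsClosed X (forwardTopology d) B)
    (hAB : Disjoint A B) :
    0 < setDist d A B :=
  isUC_pos_dist_closed_general d hd hN hUC A B hA hB hAc hBc hAB
end

section
/- Let (X,d) be a quasi-metric space with the Lebesgue number property: every open cover of (X,d) admits δ>0 such that for every x∈X the forward ball B⁺(x,δ) is contained in some member of the cover. Then (X,d) is a UC space. -/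
open Filter Topology Set

/-! Cover `X` by forward balls `B⁺(z, r z)` on which `f` stays within `ε / 2` of `f z`.
A Lebesgue number `δ` of this cover is a modulus of uniform continuity: when `d x y < δ`,
both `x` and `y` lie in `B⁺(x, δ)`, hence in a single ball `B⁺(z, r z)`. -/

def HasLebesgueNumberProperty {X : Type*} (d : X → X → ℝ) : Prop :=
  ∀ 𝒰 : Set (Set X), (∀ U ∈ 𝒰, (forwardTopology d).IsOpen U) → ⋃₀ 𝒰 = Set.univ →
    ∃ δ > (0:ℝ), ∀ x : X, ∃ U ∈ 𝒰, {y : X | d x y < δ} ⊆ U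

theorem isOpen_forwardBall {X : Type*} (d : X → X → ℝ) (x : X) {ε : ℝ} (hε : 0 < ε) :
    (forwardTopology d).IsOpen {y | d x y < ε} :=
  TopologicalSpace.GenerateOpen.basic _ ⟨x, ε, hε, rfl⟩

theorem sUnion_range_forwardBall {X : Type*} {d : X → X → ℝ} (hd : IsQuasiMetric d)
    {r : X → ℝ} (hr : ∀ x, 0 < r x) : ⋃₀ range (fun z => {y | d z y < r z}) = univ :=
  eq_univ_of_forall fun x => mem_sUnion_of_mem (by simpa [hd.refl x] using hr x) ⟨x, rfl⟩

theorem HasLebesgueNumberProperty.exists_forwardBall_subset {X : Type*} {d : X → X → ℝ}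
    (hd : IsQuasiMetric d) (hL : HasLebesgueNumberProperty d) {r : X → ℝ}
    (hr : ∀ x, 0 < r x) :
    ∃ δ > (0:ℝ), ∀ x, ∃ z, {y | d x y < δ} ⊆ {y | d z y < r z} := by
  obtain ⟨δ, hδ, hsub⟩ := hL _ (by rintro _ ⟨z, rfl⟩; exact isOpen_forwardBall d z (hr z))
    (sUnion_range_forwardBall hd hr)
  refine ⟨δ, hδ, fun x => ?_⟩
  obtain ⟨_, ⟨z, rfl⟩, hz⟩ := hsub x
  exact ⟨z, hz⟩

/-- a quasi-metric space with the Lebesgue number property is UC. -/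
theorem isUC_of_lebesgue {X : Type*} (d : X → X → ℝ) (hd : IsQuasiMetric d)
    (hL : ∀ 𝒰 : Set (Set X), (∀ U ∈ 𝒰, (forwardTopology d).IsOpen U) →
      ⋃₀ 𝒰 = Set.univ →
      ∃ δ > (0:ℝ), ∀ x : X, ∃ U ∈ 𝒰, {y : X | d x y < δ} ⊆ U) :
    IsUC d := by
  intro f hf ε hε
  choose r hr hosc using fun z => hf z (ε / 2) (half_pos hε)
  obtain ⟨δ, hδ, hsub⟩ := HasLebesgueNumberProperty.exists_forwardBall_subset hd hL hr
  refine ⟨δ, hδ, fun x y hxy => ?_⟩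
  obtain ⟨z, hz⟩ := hsub x
  have hfx : |f z - f x| < ε / 2 := hosc z x (hz (by simpa [hd.refl x] using hδ))
  have hfy : |f z - f y| < ε / 2 := hosc z y (hz hxy)
  calc |f x - f y| ≤ |f z - f x| + |f z - f y| := by
        simpa only [Real.dist_eq] using dist_triangle_left (f x) (f y) (f z)
    _ < ε := by linarith
end
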